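/- arXiv:math/0611920 — 2 statements merged into one kernel-verified Lean document; each statement's English description precedes it below -/
import Mathlib

section
/- Every reverse-Funk horofunction of an open cone C containing no lines is a Busemann point: for each x in the Euclidean boundary of C (lying in the boundary of a cross section D), the straight line segment from an interior point toward x is a geodesic whose limit in the reverse Funk sense is ψ_x := r_C(·,x) − r_C(b,x). -/
open Set Filter Topology

variable {V : Type*} [NormedAddCommGroup V] [NormedSpace ℝ V] [FiniteDimensional ℝ V]

/-- An open cone: non-empty, open, convex, invariant under positive scaling, not containing 0. -/
def IsOpenCone (T : Set V) : Prop :=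
  T.Nonempty ∧ IsOpen T ∧ Convex ℝ T ∧ (∀ c : ℝ, 0 < c → ∀ u ∈ T, c • u ∈ T) ∧ (0 : V) ∉ T

/-- The gauge `M_T(y/x) = inf {λ > 0 : λ • x - y ∈ closure T}`. -/
noncomputable def funkM (T : Set V) (y x : V) : ℝ :=
  sInf {l : ℝ | 0 < l ∧ l • x - y ∈ closure T}

/-- The Funk metric `F_T(x,y) = log inf {λ > 0 : λ • y - x ∈ closure T}`. -/
noncomputable def funkF (T : Set V) (x y : V) : ℝ := Real.log (funkM T x y)

/-- The reverse Funk metric `r_T(x,y) = F_T(y,x)`. -/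
noncomputable def revF (T : Set V) (x y : V) : ℝ := Real.log (funkM T y x)

/-- The Hilbert metric as the symmetrisation of the Funk metric. -/
noncomputable def hilD (T : Set V) (x y : V) : ℝ := funkF T x y + revF T x y

/-- The dual cone, as a set of continuous linear functionals. -/
def dualCone (T : Set V) : Set (V →L[ℝ] ℝ) := {z | ∀ u ∈ T, 0 ≤ z u}

/-- The open tangent cone `τ(T,x) = {λ (w - x) : λ > 0, w ∈ T}`. -/
def openTangent (T : Set V) (x : V) : Set V :=
  {v | ∃ l : ℝ, 0 < l ∧ ∃ w ∈ T, v = l • (w - x)}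

/-! Write `μ = M_C(x/z)` and `ρ r = μ (1 - r) + r`. Since the closure of `C` contains no line, the
infimum defining `μ` is attained and positive, and the slice of `closure C` in the plane spanned by
`x` and `z` is the sector `{α x + β z | β ≥ 0, μ α + β ≥ 0}`. Reading off gauges in that sector gives
`M_C(p t / p u) = ρ t / ρ u` for the points `p r = (1 - r) x + r z`, so the reverse Funk distances
along the segment telescope. For the limit, `y ↦ M_C(y/w)` is the Minkowski gauge of the convex
neighbourhood `w - closure C` of `0`, hence continuous, and it is positive at `x`. -/

open scoped Pointwise

theorem IsOpen.setOf_sub_mem_closure_mem_nhds {G : Type*} [TopologicalSpace G] [AddGroup G]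
    [IsTopologicalAddGroup G] {U : Set G} (hU : IsOpen U) {w : G} (hw : w ∈ U) :
    {v | w - v ∈ closure U} ∈ 𝓝 (0 : G) := by
  have : closure U ∈ 𝓝 (w - 0) := by
    simpa using mem_of_superset (hU.mem_nhds hw) subset_closure
  exact (continuous_const.sub continuous_id).continuousAt.preimage_mem_nhds this

section

variable {E : Type*} [NormedAddCommGroup E] [NormedSpace ℝ E] {C : Set E}

theorem Convex.setOf_sub_mem_closure (hC : Convex ℝ C) (w : E) :
    Convex ℝ {v | w - v ∈ closure C} := by
  intro u hu v hv a b ha hb hab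
  show w - (a • u + b • v) ∈ closure C
  convert hC.closure hu hv ha hb hab using 1
  linear_combination (norm := module) -hab • w

theorem funkM_nonneg (y w : E) : 0 ≤ funkM C y w :=
  Real.sInf_nonneg fun _ hl => hl.1.le

theorem funkM_le {l : ℝ} (hl : 0 < l) {w y : E} (h : l • w - y ∈ closure C) :
    funkM C y w ≤ l :=
  csInf_le ⟨0, fun _ hl => hl.1.le⟩ ⟨hl, h⟩

namespace IsOpenCone

theorem smul_mem_closure (hC : IsOpenCone C) {c : ℝ} (hc : 0 < c) {v : E} (hv : v ∈ closure C) :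
    c • v ∈ closure C :=
  map_mem_closure (continuous_const_smul c) hv fun u hu => hC.2.2.2.1 c hc u hu

theorem smul_mem_closure_of_nonneg (hC : IsOpenCone C) {c : ℝ} (hc : 0 ≤ c) {v : E}
    (hv : v ∈ closure C) : c • v ∈ closure C := by
  have : closure (Ioi (0 : ℝ)) ⊆ {c : ℝ | c • v ∈ closure C} :=
    closure_minimal (fun c hc => hC.smul_mem_closure hc hv)
      (isClosed_closure.preimage (continuous_id.smul continuous_const))
  exact this (by rwa [closure_Ioi])

theorem add_mem_of_mem_closure (hC : IsOpenCone C) {v w : E} (hv : v ∈ closure C)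
    (hw : w ∈ C) : v + w ∈ C := by
  have hmid : (1 / 2 : ℝ) • w + (1 / 2 : ℝ) • v ∈ C := by
    simpa only [hC.2.1.interior_eq] using hC.2.2.1.combo_interior_closure_mem_interior
      (hC.2.1.interior_eq.symm ▸ hw) hv (by norm_num) (by norm_num) (by norm_num)
  convert hC.2.2.2.1 2 two_pos _ hmid using 1
  module

theorem mem_smul_setOf_sub_mem_closure_iff (hC : IsOpenCone C) {l : ℝ} (hl : 0 < l) {w y : E} :
    y ∈ l • {v | w - v ∈ closure C} ↔ l • w - y ∈ closure C := by
  rw [mem_smul_set_iff_inv_smul_mem₀ hl.ne', mem_ofPred_eq]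
  constructor
  · intro h
    convert hC.smul_mem_closure hl h using 1
    match_scalars <;> field_simp
  · intro h
    convert hC.smul_mem_closure (inv_pos.2 hl) h using 1
    match_scalars <;> field_simp

theorem funkM_eq_gauge (hC : IsOpenCone C) (y w : E) :
    funkM C y w = gauge {v | w - v ∈ closure C} y := by
  rw [funkM, gauge_def]
  congr 1
  ext l
  exact and_congr_right fun hl => (hC.mem_smul_setOf_sub_mem_closure_iff hl).symm

theorem continuous_funkM (hC : IsOpenCone C) {w : E} (hw : w ∈ C) :
    Continuous fun y => funkM C y w := by
  simp_rw [hC.funkM_eq_gauge]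
  exact continuous_gauge (hC.2.2.1.setOf_sub_mem_closure w)
    (hC.2.1.setOf_sub_mem_closure_mem_nhds hw)

theorem nonempty_setOf_smul_sub_mem_closure (hC : IsOpenCone C) {w : E} (hw : w ∈ C) (y : E) :
    {l : ℝ | 0 < l ∧ l • w - y ∈ closure C}.Nonempty := by
  obtain ⟨l, hl, hy⟩ :=
    (absorbent_nhds_zero (hC.2.1.setOf_sub_mem_closure_mem_nhds hw)).gauge_set_nonempty (x := y)
  exact ⟨l, hl, (hC.mem_smul_setOf_sub_mem_closure_iff hl).1 hy⟩

theorem le_funkM (hC : IsOpenCone C) {w : E} (hw : w ∈ C) {y : E} {a : ℝ}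
    (h : ∀ l, 0 < l → l • w - y ∈ closure C → a ≤ l) : a ≤ funkM C y w :=
  le_csInf (hC.nonempty_setOf_smul_sub_mem_closure hw y) fun l hl => h l hl.1 hl.2

theorem funkM_pos_and_smul_sub_mem_closure (hC : IsOpenCone C)
    (hlines : ∀ v, v ∈ closure C → -v ∈ closure C → v = 0) {w y : E} (hw : w ∈ C)
    (hy : y ∈ closure C) (hy0 : y ≠ 0) :
    0 < funkM C y w ∧ funkM C y w • w - y ∈ closure C := by
  have hclosed : closure {l : ℝ | 0 < l ∧ l • w - y ∈ closure C} ⊆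
      {l : ℝ | l • w - y ∈ closure C} :=
    closure_minimal (fun _ hl => hl.2) (isClosed_closure.preimage (by fun_prop))
  have hmem : funkM C y w • w - y ∈ closure C :=
    hclosed (csInf_mem_closure (hC.nonempty_setOf_smul_sub_mem_closure hw y)
      ⟨0, fun _ hl => hl.1.le⟩)
  refine ⟨(funkM_nonneg y w).lt_of_ne fun h0 => hy0 (hlines y hy ?_), hmem⟩
  simpa [← h0] using hmem

theorem nonneg_of_smul_add_smul_mem_closure (hC : IsOpenCone C) {w x : E} (hw : w ∈ C)
    (hx : x ∈ closure C) (hxC : x ∉ C) {α β : ℝ} (h : α • x + β • w ∈ closure C) : 0 ≤ β := by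
  by_contra! hβ
  have hαx : α • x ∈ C := by
    simpa using hC.add_mem_of_mem_closure h (hC.2.2.2.1 (-β) (neg_pos.2 hβ) w hw)
  rcases lt_or_ge 0 α with hα | hα
  · apply hxC
    simpa [smul_smul, inv_mul_cancel₀ hα.ne'] using hC.2.2.2.1 α⁻¹ (inv_pos.2 hα) _ hαx
  · apply hC.2.2.2.2
    simpa using hC.add_mem_of_mem_closure (hC.smul_mem_closure_of_nonneg (neg_nonneg.2 hα) hx) hαx

theorem funkM_mul_add_nonneg (hC : IsOpenCone C)
    (hlines : ∀ v, v ∈ closure C → -v ∈ closure C → v = 0) {w x : E} (hw : w ∈ C)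
    (hx : x ∈ closure C) (hxC : x ∉ C) (hx0 : x ≠ 0) {α β : ℝ}
    (h : α • x + β • w ∈ closure C) : 0 ≤ funkM C x w * α + β := by
  have hβ := hC.nonneg_of_smul_add_smul_mem_closure hw hx hxC h
  rcases le_or_gt 0 α with hα | hα
  · exact add_nonneg (mul_nonneg (funkM_nonneg x w) hα) hβ
  have hmem : (β / -α) • w - x ∈ closure C := by
    convert hC.smul_mem_closure (inv_pos.2 (neg_pos.2 hα)) h using 1
    match_scalars <;> field_simp [hα.ne]
  rcases hβ.eq_or_lt with rfl | hβ
  · exact absurd (hlines x hx (by simpa using hmem)) hx0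
  · have := funkM_le (div_pos hβ (neg_pos.2 hα)) hmem
    rw [le_div_iff₀ (neg_pos.2 hα)] at this
    linarith

theorem funkM_segment (hC : IsOpenCone C)
    (hlines : ∀ v, v ∈ closure C → -v ∈ closure C → v = 0) {w x : E} (hw : w ∈ C)
    (hx : x ∈ closure C) (hxC : x ∉ C) (hx0 : x ≠ 0) {t u : ℝ} (ht : 0 < t) (htu : t ≤ u)
    (hu : u ≤ 1) :
    funkM C ((1 - t) • x + t • w) ((1 - u) • x + u • w)
      = (funkM C x w * (1 - t) + t) / (funkM C x w * (1 - u) + u) := by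
  obtain ⟨hμ, hμmem⟩ := hC.funkM_pos_and_smul_sub_mem_closure hlines hw hx hx0
  set μ := funkM C x w
  have hρt : 0 < μ * (1 - t) + t := by nlinarith
  have hρu : 0 < μ * (1 - u) + u := by nlinarith
  apply le_antisymm
  · apply funkM_le (div_pos hρt hρu)
    convert hC.smul_mem_closure_of_nonneg (div_nonneg (sub_nonneg.2 htu) hρu.le) hμmem using 1
    match_scalars <;> field_simp <;> ring
  · have hpu : (1 - u) • x + u • w ∈ C := hC.add_mem_of_mem_closure
      (hC.smul_mem_closure_of_nonneg (sub_nonneg.2 hu) hx) (hC.2.2.2.1 u (ht.trans_le htu) w hw)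
    refine hC.le_funkM hpu fun l _ hl => ?_
    have := hC.funkM_mul_add_nonneg hlines hw hx hxC hx0
      (α := l * (1 - u) - (1 - t)) (β := l * u - t) (by convert hl using 1; module)
    rw [div_le_iff₀ hρu]
    linarith

theorem revF_segment_add (hC : IsOpenCone C)
    (hlines : ∀ v, v ∈ closure C → -v ∈ closure C → v = 0) {w x : E} (hw : w ∈ C)
    (hx : x ∈ closure C) (hxC : x ∉ C) (hx0 : x ≠ 0) {s t u : ℝ} (hs : 0 < s) (hst : s ≤ t)
    (htu : t ≤ u) (hu : u ≤ 1) :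
    revF C ((1 - u) • x + u • w) ((1 - t) • x + t • w)
        + revF C ((1 - t) • x + t • w) ((1 - s) • x + s • w)
      = revF C ((1 - u) • x + u • w) ((1 - s) • x + s • w) := by
  have hμ := (hC.funkM_pos_and_smul_sub_mem_closure hlines hw hx hx0).1
  have hρ : ∀ r, 0 < r → r ≤ 1 → funkM C x w * (1 - r) + r ≠ 0 := fun r hr hr1 => by
    nlinarith
  have ht := hs.trans_le hst
  rw [revF, revF, revF, hC.funkM_segment hlines hw hx hxC hx0 ht htu hu,
    hC.funkM_segment hlines hw hx hxC hx0 hs hst (htu.trans hu),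
    hC.funkM_segment hlines hw hx hxC hx0 hs (hst.trans htu) hu,
    Real.log_div (hρ t ht (htu.trans hu)) (hρ u (ht.trans_le htu) hu),
    Real.log_div (hρ s hs (hst.trans (htu.trans hu))) (hρ t ht (htu.trans hu)),
    Real.log_div (hρ s hs (hst.trans (htu.trans hu))) (hρ u (ht.trans_le htu) hu)]
  ring

theorem continuousAt_revF (hC : IsOpenCone C)
    (hlines : ∀ v, v ∈ closure C → -v ∈ closure C → v = 0) {w x : E} (hw : w ∈ C)
    (hx : x ∈ closure C) (hx0 : x ≠ 0) : ContinuousAt (revF C w) x :=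
  (hC.continuous_funkM hw).continuousAt.log
    (hC.funkM_pos_and_smul_sub_mem_closure hlines hw hx hx0).1.ne'

end IsOpenCone

end

theorem revF_horofunction_busemann_general (C : Set V) (hC : IsOpenCone C)
    (hlines : ∀ v, v ∈ closure C → -v ∈ closure C → v = 0)
    (ψ : V →L[ℝ] ℝ)
    (D : Set V) (hD : D = {u | u ∈ C ∧ ψ u = 1})
    (b : V) (hb : b ∈ D)
    (x : V) (hx : x ∈ closure D \ D) (z : V) (hz : z ∈ D) :
    (∀ s t u : ℝ, 0 < s → s ≤ t → t ≤ u → u ≤ 1 →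
        revF C ((1 - u) • x + u • z) ((1 - t) • x + t • z)
          + revF C ((1 - t) • x + t • z) ((1 - s) • x + s • z)
        = revF C ((1 - u) • x + u • z) ((1 - s) • x + s • z)) ∧
    (∀ w ∈ C, Tendsto (fun l : ℝ => revF C w ((1 - l) • x + l • z)
          - revF C b ((1 - l) • x + l • z)) (𝓝[>] (0 : ℝ))
        (𝓝 (revF C w x - revF C b x))) := by
  subst hD
  have hψx : ψ x = 1 :=
    closure_minimal (fun _ hu => hu.2) (isClosed_eq ψ.continuous continuous_const) hx.1
  have hx_closure : x ∈ closure C := closure_mono (fun _ hu => hu.1) hx.1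
  have hx_notMem : x ∉ C := fun h => hx.2 ⟨h, hψx⟩
  have hx0 : x ≠ 0 := by
    rintro rfl
    simp at hψx
  refine ⟨fun s t u hs hst htu hu =>
    hC.revF_segment_add hlines hz.1 hx_closure hx_notMem hx0 hs hst htu hu, fun w hw => ?_⟩
  have hseg : Tendsto (fun l : ℝ => (1 - l) • x + l • z) (𝓝[>] 0) (𝓝 x) := by
    convert ((by fun_prop : Continuous fun l : ℝ => (1 - l) • x + l • z).tendsto 0).mono_left
      nhdsWithin_le_nhds using 2
    simp
  exact ((hC.continuousAt_revF hlines hw hx_closure hx0).tendsto.comp hseg).sub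
    ((hC.continuousAt_revF hlines hb.1 hx_closure hx0).tendsto.comp hseg)

/-- every reverse-Funk horofunction is a Busemann point: the straight line
segment from an interior point `z` toward a boundary point `x` of the cross section is a
geodesic of the reverse Funk metric converging in the reverse Funk sense to
`ψ_x = r_C(·,x) − r_C(b,x)`. -/
theorem revF_horofunction_busemann (C : Set V) (hC : IsOpenCone C)
    (hlines : ∀ v, v ∈ closure C → -v ∈ closure C → v = 0)
    (ψ : V →L[ℝ] ℝ) (hψ : ∀ u ∈ closure C, u ≠ 0 → 0 < ψ u)
    (D : Set V) (hD : D = {u | u ∈ C ∧ ψ u = 1}) (hDb : Bornology.IsBounded D)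
    (b : V) (hb : b ∈ D)
    (x : V) (hx : x ∈ closure D \ D) (z : V) (hz : z ∈ D) :
    (∀ s t u : ℝ, 0 < s → s ≤ t → t ≤ u → u ≤ 1 →
        revF C ((1 - u) • x + u • z) ((1 - t) • x + t • z)
          + revF C ((1 - t) • x + t • z) ((1 - s) • x + s • z)
        = revF C ((1 - u) • x + u • z) ((1 - s) • x + s • z)) ∧
    (∀ w ∈ C, Tendsto (fun l : ℝ => revF C w ((1 - l) • x + l • z)
          - revF C b ((1 - l) • x + l • z)) (𝓝[>] (0 : ℝ))
        (𝓝 (revF C w x - revF C b x))) :=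
  revF_horofunction_busemann_general C hC hlines ψ D hD b hb x hx z hz
end

section
/- Let T be an open convex cone with basepoint b, x ∈ ∂T, y ∈ T, and y_λ := (1−λ)x + λy for λ ∈ (0,1). Then as λ → 0, the functions F_T(·, y_λ) − F_T(b, y_λ) converge pointwise on T to the restriction to T of the Funk horofunction f_{τ(T,x),y} of the tangent cone, where f_{S,p}(z) := F_S(z,p) − F_S(b,p). -/
open Set Filter Topology

variable {V : Type*} [NormedAddCommGroup V] [NormedSpace ℝ V] [FiniteDimensional ℝ V]

/-! Write `y_λ = λ • (y + s • x)` with `s = (1 - λ) / λ → ∞`. The Funk gauge scales as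
`M_T(z, c • p) = c⁻¹ * M_T(z, p)`, so the factor `λ` cancels in the difference and it suffices to
show `M_T(z, y + s • x) → M_τ(z, y)` as `s → ∞`, where `τ = τ(T, x)`.
Since `x` lies in the lineality space of `closure τ`, `M_τ(z, y + s • x) = M_τ(z, y)`, and this is
at most `M_T(z, y + s • x)` because `T ⊆ τ`. Conversely, for `m > M_τ(z, y)` the point `m • y - z`
lies in the open cone `τ`, i.e. `t • x + (m • y - z) ∈ T` for some `t > 0`, and then
`m • (y + s • x) - z ∈ T` as soon as `m * s ≥ t`. -/

section

omit [FiniteDimensional ℝ V]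

namespace IsOpenCone

variable {T : Set V}

theorem isOpen (hT : IsOpenCone T) : IsOpen T := hT.2.1

theorem convex (hT : IsOpenCone T) : Convex ℝ T := hT.2.2.1

theorem smul_mem (hT : IsOpenCone T) {c : ℝ} (hc : 0 < c) {u : V} (hu : u ∈ T) : c • u ∈ T :=
  hT.2.2.2.1 c hc u hu

theorem zero_notMem (hT : IsOpenCone T) : (0 : V) ∉ T := hT.2.2.2.2

theorem zero_mem_closure (hT : IsOpenCone T) : (0 : V) ∈ closure T := by
  obtain ⟨p, hp⟩ := hT.1
  have hlim : Tendsto (fun c : ℝ => c • p) (𝓝[>] 0) (𝓝 0) := by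
    simpa using ((tendsto_id (x := 𝓝 (0 : ℝ))).smul_const p).mono_left nhdsWithin_le_nhds
  exact mem_closure_of_tendsto hlim
    (eventually_mem_nhdsWithin.mono fun c hc => hT.smul_mem hc hp)

theorem smul_mem_closure_s15 (hT : IsOpenCone T) {c : ℝ} (hc : 0 ≤ c) {u : V}
    (hu : u ∈ closure T) : c • u ∈ closure T := by
  rcases hc.eq_or_lt with rfl | hc
  · simpa using hT.zero_mem_closure
  · exact map_mem_closure (continuous_const_smul c) hu fun _ => hT.smul_mem hc

theorem add_mem_of_mem_closure_s15 (hT : IsOpenCone T) {z u : V} (hz : z ∈ T)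
    (hu : u ∈ closure T) : z + u ∈ T := by
  have hmid : (1 / 2 : ℝ) • z + (1 / 2 : ℝ) • u ∈ T := by
    simpa only [hT.isOpen.interior_eq] using
      hT.convex.combo_interior_closure_mem_interior (hT.isOpen.interior_eq.symm ▸ hz) hu
        (by norm_num) (by norm_num) (by norm_num)
  convert hT.smul_mem two_pos hmid using 1
  module

theorem neg_notMem_closure (hT : IsOpenCone T) {z : V} (hz : z ∈ T) : -z ∉ closure T :=
  fun h => hT.zero_notMem (by simpa using hT.add_mem_of_mem_closure_s15 hz h)

theorem eventually_smul_sub_mem (hT : IsOpenCone T) {p : V} (hp : p ∈ T) (z : V) :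
    ∀ᶠ l : ℝ in atTop, l • p - z ∈ T := by
  have hlim : Tendsto (fun l : ℝ => p - l⁻¹ • z) atTop (𝓝 p) := by
    simpa using tendsto_const_nhds.sub ((tendsto_inv_atTop_zero (𝕜 := ℝ)).smul_const z)
  filter_upwards [hlim.eventually (hT.isOpen.mem_nhds hp), eventually_gt_atTop 0]
    with l hl hl0
  simpa [smul_sub, smul_smul, hl0.ne'] using hT.smul_mem hl0 hl

end IsOpenCone

variable {S T : Set V}

theorem funkM_nonneg_s15 (z p : V) : 0 ≤ funkM S z p :=
  Real.sInf_nonneg fun _ hl => hl.1.le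

theorem funkM_le_s15 {z p : V} {m : ℝ} (hm : 0 < m) (h : m • p - z ∈ closure S) :
    funkM S z p ≤ m :=
  csInf_le ⟨0, fun _ hl => hl.1.le⟩ ⟨hm, h⟩

open scoped Pointwise in
theorem funkM_smul (z p : V) {c : ℝ} (hc : 0 < c) :
    funkM S z (c • p) = c⁻¹ * funkM S z p := by
  have hset : {l : ℝ | 0 < l ∧ l • c • p - z ∈ closure S}
      = c⁻¹ • {l : ℝ | 0 < l ∧ l • p - z ∈ closure S} := by
    ext l
    constructor
    · rintro ⟨hl, hmem⟩
      refine ⟨l * c, ⟨mul_pos hl hc, by rwa [smul_smul] at hmem⟩, ?_⟩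
      simp only [smul_eq_mul]
      field_simp
    · rintro ⟨m, ⟨hm, hmem⟩, rfl⟩
      simp only [smul_eq_mul]
      refine ⟨by positivity, ?_⟩
      rwa [smul_smul, mul_right_comm, inv_mul_cancel₀ hc.ne', one_mul]
  rw [funkM, funkM, hset, Real.sInf_smul_of_nonneg (by positivity), smul_eq_mul]

namespace IsOpenCone

theorem nonempty_funkM_set (hS : IsOpenCone S) {p : V} (hp : p ∈ S) (z : V) :
    {l : ℝ | 0 < l ∧ l • p - z ∈ closure S}.Nonempty := by
  obtain ⟨l, hl, hl0⟩ := ((hS.eventually_smul_sub_mem hp z).and (eventually_gt_atTop 0)).exists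
  exact ⟨l, hl0, subset_closure hl⟩

theorem le_funkM_s15 (hS : IsOpenCone S) {z p : V} (hp : p ∈ S) {a : ℝ}
    (h : ∀ l, 0 < l → l • p - z ∈ closure S → a ≤ l) : a ≤ funkM S z p :=
  le_csInf (hS.nonempty_funkM_set hp z) fun l hl => h l hl.1 hl.2

theorem funkM_pos (hS : IsOpenCone S) {z p : V} (hz : z ∈ S) (hp : p ∈ S) :
    0 < funkM S z p := by
  have hfar : ∀ᶠ l : ℝ in 𝓝 0, l • p - z ∈ (closure S)ᶜ := by
    have hcont : Continuous fun l : ℝ => l • p - z := by fun_prop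
    exact hcont.continuousAt.eventually_mem (isClosed_closure.isOpen_compl.mem_nhds
      (by simpa using hS.neg_notMem_closure hz))
  obtain ⟨ε, hε, hball⟩ := Metric.eventually_nhds_iff.1 hfar
  refine hε.trans_le (hS.le_funkM_s15 hp fun l hl hmem => ?_)
  by_contra! hlt
  exact hball (by rwa [Real.dist_eq, sub_zero, abs_of_pos hl]) hmem

theorem funkM_le_of_subset (hS : IsOpenCone S) (hST : S ⊆ T) {z p : V} (hp : p ∈ S) :
    funkM T z p ≤ funkM S z p :=
  hS.le_funkM_s15 hp fun _ hl h => funkM_le_s15 hl (closure_mono hST h)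

theorem smul_sub_mem_of_funkM_lt (hS : IsOpenCone S) {z p : V} (hp : p ∈ S) {m : ℝ}
    (h : funkM S z p < m) : m • p - z ∈ S := by
  obtain ⟨l, ⟨-, hmem⟩, hlm⟩ := exists_lt_of_csInf_lt (hS.nonempty_funkM_set hp z) h
  have hsplit : (m - l) • p + (l • p - z) = m • p - z := by module
  exact hsplit ▸ hS.add_mem_of_mem_closure_s15 (hS.smul_mem (sub_pos.2 hlm) hp) hmem

theorem funkF_smul (hS : IsOpenCone S) {z p : V} (hz : z ∈ S) (hp : p ∈ S) {c : ℝ}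
    (hc : 0 < c) : funkF S z (c • p) = funkF S z p - Real.log c := by
  rw [funkF, funkF, funkM_smul z p hc,
    Real.log_mul (inv_ne_zero hc.ne') (hS.funkM_pos hz hp).ne', Real.log_inv]
  ring

end IsOpenCone

section Tangent

variable (hT : IsOpenCone T) {x : V}
include hT

theorem mem_openTangent_iff {v : V} : v ∈ openTangent T x ↔ ∃ t : ℝ, 0 < t ∧ t • x + v ∈ T := by
  constructor
  · rintro ⟨l, hl, w, hw, rfl⟩
    exact ⟨l, hl, by simpa [smul_sub] using hT.smul_mem hl hw⟩
  · rintro ⟨t, ht, hw⟩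
    refine ⟨t, ht, t⁻¹ • (t • x + v), hT.smul_mem (inv_pos.2 ht) hw, ?_⟩
    rw [smul_sub, smul_smul, mul_inv_cancel₀ ht.ne', one_smul, add_sub_cancel_left]

theorem subset_openTangent (hx : x ∈ closure T) : T ⊆ openTangent T x := fun w hw =>
  (mem_openTangent_iff hT).2 ⟨1, one_pos, by simpa [add_comm] using hT.add_mem_of_mem_closure_s15 hw hx⟩

theorem isOpenCone_openTangent (hx : x ∈ frontier T) : IsOpenCone (openTangent T x) := by
  obtain ⟨hxc, hxT⟩ : x ∈ closure T \ T := hT.isOpen.frontier_eq ▸ hx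
  refine ⟨hT.1.mono (subset_openTangent hT hxc), ?_, ?_, ?_, ?_⟩
  · refine isOpen_iff_mem_nhds.2 fun v hv => ?_
    obtain ⟨t, ht, hmem⟩ := (mem_openTangent_iff hT).1 hv
    exact mem_of_superset ((hT.isOpen.preimage (continuous_const.add continuous_id)).mem_nhds hmem)
      fun u hu => (mem_openTangent_iff hT).2 ⟨t, ht, hu⟩
  · intro v₁ hv₁ v₂ hv₂ a b ha hb hab
    obtain ⟨t₁, ht₁, h₁⟩ := (mem_openTangent_iff hT).1 hv₁
    obtain ⟨t₂, ht₂, h₂⟩ := (mem_openTangent_iff hT).1 hv₂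
    have ht : 0 < a * t₁ + b * t₂ := by
      rcases ha.eq_or_lt with rfl | ha
      · simp_all
      · positivity
    refine (mem_openTangent_iff hT).2 ⟨a * t₁ + b * t₂, ht, ?_⟩
    convert hT.convex h₁ h₂ ha hb hab using 1
    module
  · rintro c hc u ⟨l, hl, w, hw, rfl⟩
    exact ⟨c * l, mul_pos hc hl, w, hw, by rw [smul_smul]⟩
  · intro h0
    obtain ⟨t, ht, hmem⟩ := (mem_openTangent_iff hT).1 h0
    exact hxT (by simpa [ht.ne'] using hT.smul_mem (inv_pos.2 ht) hmem)

theorem add_smul_mem_openTangent (hx : x ∈ closure T) {v : V} (hv : v ∈ openTangent T x)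
    (s : ℝ) : v + s • x ∈ openTangent T x := by
  obtain ⟨t, ht, hmem⟩ := (mem_openTangent_iff hT).1 hv
  refine (mem_openTangent_iff hT).2 ?_
  rcases le_or_gt 0 s with hs | hs
  · refine ⟨t, ht, ?_⟩
    simpa [add_assoc] using hT.add_mem_of_mem_closure_s15 hmem (hT.smul_mem_closure_s15 hs hx)
  · refine ⟨t - s, by linarith, ?_⟩
    convert hmem using 1
    module

theorem add_smul_mem_closure_openTangent_iff (hx : x ∈ closure T) {v : V} (s : ℝ) :
    v + s • x ∈ closure (openTangent T x) ↔ v ∈ closure (openTangent T x) := by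
  have hshift : ∀ s : ℝ, ∀ u ∈ closure (openTangent T x), u + s • x ∈ closure (openTangent T x) :=
    fun s u hu => map_mem_closure (f := (· + s • x)) (by fun_prop) hu
      fun w hw => add_smul_mem_openTangent hT hx hw s
  exact ⟨fun h => by simpa using hshift (-s) _ h, hshift s v⟩

theorem funkM_openTangent_add_smul (hx : x ∈ closure T) (z p : V) (s : ℝ) :
    funkM (openTangent T x) z (p + s • x) = funkM (openTangent T x) z p := by
  simp only [funkM, smul_add, smul_smul, add_sub_right_comm,
    add_smul_mem_closure_openTangent_iff hT hx]

theorem tendsto_funkM_add_smul_atTop (hx : x ∈ frontier T) {y : V} (hy : y ∈ T) (z : V) :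
    Tendsto (fun s : ℝ => funkM T z (y + s • x)) atTop (𝓝 (funkM (openTangent T x) z y)) := by
  have hxc : x ∈ closure T := frontier_subset_closure hx
  have hτ := isOpenCone_openTangent hT hx
  have hlower : ∀ᶠ s : ℝ in atTop, funkM (openTangent T x) z y ≤ funkM T z (y + s • x) := by
    filter_upwards [eventually_ge_atTop 0] with s hs
    rw [← funkM_openTangent_add_smul hT hxc z y s]
    exact hT.funkM_le_of_subset (subset_openTangent hT hxc)
      (hT.add_mem_of_mem_closure_s15 hy (hT.smul_mem_closure_s15 hs hxc))
  have hupper : ∀ m > funkM (openTangent T x) z y, ∀ᶠ s : ℝ in atTop,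
      funkM T z (y + s • x) ≤ m := by
    intro m hm
    have hm0 : 0 < m := (funkM_nonneg_s15 z y).trans_lt hm
    obtain ⟨t, ht, hmem⟩ := (mem_openTangent_iff hT).1
      (hτ.smul_sub_mem_of_funkM_lt (subset_openTangent hT hxc hy) hm)
    filter_upwards [eventually_ge_atTop (t / m)] with s hs
    have hts : 0 ≤ m * s - t := by rw [div_le_iff₀ hm0] at hs; linarith
    have hsplit : (t • x + (m • y - z)) + (m * s - t) • x = m • (y + s • x) - z := by module
    exact funkM_le_s15 hm0 (subset_closure
      (hsplit ▸ hT.add_mem_of_mem_closure_s15 hmem (hT.smul_mem_closure_s15 hts hxc)))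
  refine tendsto_order.2 ⟨fun c hc => hlower.mono fun s hs => hc.trans_le hs, fun c hc => ?_⟩
  obtain ⟨m, hm, hmc⟩ := exists_between hc
  exact (hupper m hm).mono fun s hs => hs.trans_lt hmc

theorem tendsto_funkF_add_smul_atTop (hx : x ∈ frontier T) {y z : V} (hy : y ∈ T) (hz : z ∈ T) :
    Tendsto (fun s : ℝ => funkF T z (y + s • x)) atTop (𝓝 (funkF (openTangent T x) z y)) := by
  have hsub := subset_openTangent hT (frontier_subset_closure hx)
  have hpos := (isOpenCone_openTangent hT hx).funkM_pos (hsub hz) (hsub hy)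
  exact (Real.continuousAt_log hpos.ne').tendsto.comp (tendsto_funkM_add_smul_atTop hT hx hy z)

end Tangent

end

/-- along a segment toward `x ∈ ∂T`, the Funk distance-difference functions
converge pointwise on `T` to the Funk horofunction of the tangent cone `τ(T,x)`. -/
theorem funkF_tendsto_tangent_horofunction (T : Set V) (hT : IsOpenCone T)
    (b : V) (hb : b ∈ T) (x : V) (hx : x ∈ frontier T) (y : V) (hy : y ∈ T) :
    ∀ w ∈ T, Tendsto (fun l : ℝ => funkF T w ((1 - l) • x + l • y)
        - funkF T b ((1 - l) • x + l • y)) (𝓝[>] (0 : ℝ))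
      (𝓝 (funkF (openTangent T x) w y - funkF (openTangent T x) b y)) := by
  intro w hw
  have hscale : Tendsto (fun l : ℝ => (1 - l) / l) (𝓝[>] 0) atTop := by
    refine (tendsto_atTop_add_const_right _ (-1) tendsto_inv_nhdsGT_zero).congr' ?_
    filter_upwards [self_mem_nhdsWithin] with l (hl : 0 < l)
    field_simp
    ring
  refine (((tendsto_funkF_add_smul_atTop hT hx hy hw).sub
    (tendsto_funkF_add_smul_atTop hT hx hy hb)).comp hscale).congr' ?_
  filter_upwards [Ioo_mem_nhdsGT (zero_lt_one' ℝ)] with l ⟨hl0, hl1⟩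
  have hseg : (1 - l) • x + l • y = l • (y + ((1 - l) / l) • x) := by
    rw [smul_add, smul_smul, mul_div_cancel₀ _ hl0.ne']
    abel
  have hmem : y + ((1 - l) / l) • x ∈ T := hT.add_mem_of_mem_closure_s15 hy
    (hT.smul_mem_closure_s15 (div_nonneg (by linarith) hl0.le) (frontier_subset_closure hx))
  simp only [Function.comp_apply, hseg, hT.funkF_smul hw hmem hl0, hT.funkF_smul hb hmem hl0]
  ring
end
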